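/- Let $N\ge 2$ be an integer, $r>0$ and $0<\alpha\le 1/r$. Equality $\int_0^{r} t (1-\alpha t)^{N-1}\,dt = \frac{N}{N+1} \left(\int_0^{r} (1-\alpha t)^{N-1}\,dt\right)^2$ holds if and only if $\alpha = 1/r$. -/

import Mathlib

/-!
Put `b = 1 - α r ∈ [0, 1)`. Both integrals are explicit polynomials in `b`, and
`∫ t (1 - α t)^(N-1) - N/(N+1) (∫ (1 - α t)^(N-1))² = b^N (1 - b^N - N (1 - b)) / (α² N (N+1))`.
By the strict Bernoulli inequality the second factor is negative, so equality holds iff `b = 0`.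
-/

open intervalIntegral

lemma integral_one_sub_mul_pow {α : ℝ} (hα : α ≠ 0) (r : ℝ) (n : ℕ) :
    ∫ t in (0:ℝ)..r, (1 - α * t) ^ n = (1 - (1 - α * r) ^ (n + 1)) / (α * (n + 1)) := by
  rw [integral_comp_sub_mul (fun x => x ^ n) hα, integral_pow, smul_eq_mul]
  field_simp
  ring

lemma integral_mul_one_sub_mul_pow {α : ℝ} (hα : α ≠ 0) (r : ℝ) (n : ℕ) :
    ∫ t in (0:ℝ)..r, t * (1 - α * t) ^ n =
      ((∫ t in (0:ℝ)..r, (1 - α * t) ^ n) - ∫ t in (0:ℝ)..r, (1 - α * t) ^ (n + 1)) / α := by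
  rw [← integral_sub (Continuous.intervalIntegrable (by fun_prop) _ _)
    (Continuous.intervalIntegrable (by fun_prop) _ _), ← integral_div]
  congr 1 with t
  field_simp
  ring

lemma one_sub_pow_lt_mul_one_sub {b : ℝ} (hb₀ : 0 ≤ b) (hb₁ : b ≠ 1) {N : ℕ} (hN : 2 ≤ N) :
    1 - b ^ N < N * (1 - b) := by
  have h := one_add_mul_self_lt_rpow_one_add (s := b - 1) (by linarith) (sub_ne_zero.2 hb₁)
    (p := N) (by exact_mod_cast hN)
  rw [add_sub_cancel, Real.rpow_natCast] at h
  linarith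

lemma moment_relation_iff_eq_zero {α b : ℝ} (hα : α ≠ 0) (hb₀ : 0 ≤ b) (hb₁ : b ≠ 1) {N : ℕ}
    (hN : 2 ≤ N) :
    ((1 - b ^ N) / (α * N) - (1 - b ^ (N + 1)) / (α * (N + 1))) / α =
      (N / (N + 1)) * ((1 - b ^ N) / (α * N)) ^ 2 ↔ b = 0 := by
  have hN₀ : (N : ℝ) ≠ 0 := by positivity
  have hgap : 1 - b ^ N - N * (1 - b) ≠ 0 :=
    (sub_neg.2 (one_sub_pow_lt_mul_one_sub hb₀ hb₁ hN)).ne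
  have hden : α ^ 2 * N * (N + 1) ≠ 0 := by positivity
  have hdiff : ((1 - b ^ N) / (α * N) - (1 - b ^ (N + 1)) / (α * (N + 1))) / α -
      (N / (N + 1)) * ((1 - b ^ N) / (α * N)) ^ 2 =
      b ^ N * (1 - b ^ N - N * (1 - b)) / (α ^ 2 * N * (N + 1)) := by
    field_simp
    ring
  rw [← sub_eq_zero, hdiff]
  simp [hgap, hden, pow_eq_zero_iff (n := N) (by omega)]

theorem stmt_1 (N : ℕ) (hN : 2 ≤ N) (r α : ℝ) (hr : 0 < r) (hα : 0 < α)
    (hαr : α ≤ 1 / r) :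
    (∫ t in (0:ℝ)..r, t * (1 - α * t) ^ (N - 1)) =
      ((N : ℝ) / (N + 1)) * (∫ t in (0:ℝ)..r, (1 - α * t) ^ (N - 1)) ^ 2 ↔
    α = 1 / r := by
  obtain ⟨n, rfl⟩ : ∃ n, N = n + 1 := ⟨N - 1, by omega⟩
  have hb₀ : 0 ≤ 1 - α * r := by rw [le_div_iff₀ hr] at hαr; linarith
  have hb₁ : 1 - α * r ≠ 1 := by nlinarith
  rw [Nat.add_sub_cancel, integral_mul_one_sub_mul_pow hα.ne', integral_one_sub_mul_pow hα.ne',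
    integral_one_sub_mul_pow hα.ne']
  have h := moment_relation_iff_eq_zero hα.ne' hb₀ hb₁ hN
  push_cast at h ⊢
  rw [h, sub_eq_zero, eq_div_iff hr.ne', eq_comm]
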